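/- arXiv:2010.11366 — 3 statements merged into one kernel-verified Lean document; each statement's English description precedes it below -/
import Mathlib

section
/- Let H be a real symmetric d×d matrix satisfying μI ⪯ H ⪯ LI with 0 < μ ≤ L, and let 0 < γ ≤ 1/L. Then for all a, b ∈ ℝ^d: ⟨a − b, b⟩ + ⟨b − a, a⟩ − γ ⟨H a, b⟩ ≤ −(γμ/2) (‖a‖² + ‖b‖²). -/
/-! The left-hand side equals `-‖a - b‖² - γ ⟨H a, b⟩`. Since `H` is symmetric, polarization gives
`2 ⟨H a, b⟩ = ⟨H a, a⟩ + ⟨H b, b⟩ - ⟨H (a - b), a - b⟩`; the lower bound `μ I ⪯ H` turns the first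
two terms into `-(γ μ / 2)(‖a‖² + ‖b‖²)`, and the upper bound `H ⪯ L I` makes the last one at most
`(γ L / 2) ‖a - b‖²`, which `-‖a - b‖²` absorbs because `γ L ≤ 1`. -/

open Matrix

variable {n R : Type*} [Fintype n]

theorem Matrix.IsSymm.two_mul_mulVec_dotProduct [CommRing R] {H : Matrix n n R} (hH : H.IsSymm)
    (a b : n → R) :
    2 * (H *ᵥ a ⬝ᵥ b) = a ⬝ᵥ H *ᵥ a + b ⬝ᵥ H *ᵥ b - (a - b) ⬝ᵥ H *ᵥ (a - b) := by
  have hba : b ⬝ᵥ H *ᵥ a = H *ᵥ a ⬝ᵥ b := dotProduct_comm _ _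
  have hab : a ⬝ᵥ H *ᵥ b = H *ᵥ a ⬝ᵥ b := by
    rw [dotProduct_mulVec, ← mulVec_transpose, hH.eq]
  simp only [mulVec_sub, dotProduct_sub, sub_dotProduct, hab, hba]
  ring

theorem sub_dotProduct_add_sub_dotProduct [CommRing R] (a b : n → R) :
    (a - b) ⬝ᵥ b + (b - a) ⬝ᵥ a = -((a - b) ⬝ᵥ (a - b)) := by
  simp only [sub_dotProduct, dotProduct_sub, dotProduct_comm b a]
  ring

section Loewner

variable [DecidableEq n] [CommRing R] [PartialOrder R] [IsOrderedRing R] [StarRing R]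
  [TrivialStar R] {H : Matrix n n R} {c : R}

theorem Matrix.PosSemidef.mul_dotProduct_self_le_dotProduct_mulVec
    (h : (H - c • 1).PosSemidef) (x : n → R) : c * (x ⬝ᵥ x) ≤ x ⬝ᵥ H *ᵥ x := by
  simpa [sub_mulVec, smul_mulVec, dotProduct_sub, dotProduct_smul]
    using h.dotProduct_mulVec_nonneg x

theorem Matrix.PosSemidef.dotProduct_mulVec_le_mul_dotProduct_self
    (h : (c • 1 - H).PosSemidef) (x : n → R) : x ⬝ᵥ H *ᵥ x ≤ c * (x ⬝ᵥ x) := by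
  simpa [sub_mulVec, smul_mulVec, dotProduct_sub, dotProduct_smul]
    using h.dotProduct_mulVec_nonneg x

end Loewner

theorem contraction_quadratic_form_general
    (d : ℕ) (μ L γ : ℝ)
    (hγ : 0 < γ) (hγL : γ ≤ 1 / L)
    (H : Matrix (Fin d) (Fin d) ℝ) (hH : H.IsHermitian)
    (hlow : (H - μ • (1 : Matrix (Fin d) (Fin d) ℝ)).PosSemidef)
    (hup : ((L • (1 : Matrix (Fin d) (Fin d) ℝ)) - H).PosSemidef) :
    ∀ a b : Fin d → ℝ,
      (a - b) ⬝ᵥ b + (b - a) ⬝ᵥ a - γ * (H.mulVec a ⬝ᵥ b)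
        ≤ -(γ * μ / 2) * (a ⬝ᵥ a + b ⬝ᵥ b) := by
  intro a b
  have hγL' : γ * L ≤ 1 := (le_div_iff₀ (one_div_pos.mp (hγ.trans_le hγL))).mp hγL
  have hpol := (isHermitian_iff_isSymm.mp hH).two_mul_mulVec_dotProduct a b
  have hab : 0 ≤ (a - b) ⬝ᵥ (a - b) := by simpa using dotProduct_star_self_nonneg (a - b)
  calc (a - b) ⬝ᵥ b + (b - a) ⬝ᵥ a - γ * (H *ᵥ a ⬝ᵥ b)
      = -((a - b) ⬝ᵥ (a - b))
          - γ / 2 * (a ⬝ᵥ H *ᵥ a + b ⬝ᵥ H *ᵥ b - (a - b) ⬝ᵥ H *ᵥ (a - b)) := by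
        rw [sub_dotProduct_add_sub_dotProduct, ← hpol]
        ring
    _ ≤ -((a - b) ⬝ᵥ (a - b))
          - γ / 2 * (μ * (a ⬝ᵥ a) + μ * (b ⬝ᵥ b) - L * ((a - b) ⬝ᵥ (a - b))) := by
        gcongr
        · exact hlow.mul_dotProduct_self_le_dotProduct_mulVec a
        · exact hlow.mul_dotProduct_self_le_dotProduct_mulVec b
        · exact hup.dotProduct_mulVec_le_mul_dotProduct_self (a - b)
    _ = -(γ * μ / 2) * (a ⬝ᵥ a + b ⬝ᵥ b) - (1 - γ * L / 2) * ((a - b) ⬝ᵥ (a - b)) := by ring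
    _ ≤ -(γ * μ / 2) * (a ⬝ᵥ a + b ⬝ᵥ b) := sub_le_self _ (mul_nonneg (by linarith) hab)

/-- If `H` is a real symmetric `d × d` matrix with `μ I ⪯ H ⪯ L I`,
`0 < μ ≤ L` and `0 < γ ≤ 1/L`, then for all `a, b ∈ ℝ^d`:
`⟨a − b, b⟩ + ⟨b − a, a⟩ − γ ⟨H a, b⟩ ≤ −(γ μ / 2)(‖a‖² + ‖b‖²)`. -/
theorem contraction_quadratic_form
    (d : ℕ) (μ L γ : ℝ) (hμ : 0 < μ) (hμL : μ ≤ L)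
    (hγ : 0 < γ) (hγL : γ ≤ 1 / L)
    (H : Matrix (Fin d) (Fin d) ℝ) (hH : H.IsHermitian)
    (hlow : (H - μ • (1 : Matrix (Fin d) (Fin d) ℝ)).PosSemidef)
    (hup : ((L • (1 : Matrix (Fin d) (Fin d) ℝ)) - H).PosSemidef) :
    ∀ a b : Fin d → ℝ,
      (a - b) ⬝ᵥ b + (b - a) ⬝ᵥ a - γ * (H.mulVec a ⬝ᵥ b)
        ≤ -(γ * μ / 2) * (a ⬝ᵥ a + b ⬝ᵥ b) :=
  contraction_quadratic_form_general d μ L γ hγ hγL H hH hlow hup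
end

section
/- Let f : ℝ^d → ℝ be twice continuously differentiable with μ I ⪯ ∇²f(x) ⪯ L I for all x ∈ ℝ^d, where 0 < μ ≤ L, and suppose ∇f(0) = 0. Let 0 < γ ≤ 1/L and h > 0. Then for all x, w ∈ ℝ^d: 2h⟨x, w − x⟩ + 2h⟨w, x − w⟩ − 2γh⟨w, ∇f(x)⟩ ≤ −γμh(‖x‖² + ‖w‖²). -/
open scoped RealInnerProductSpace

/-!
By the mean value theorem applied to `⟪∇f ·, w⟫` on the segment `[0, x]`, and `∇f 0 = 0`,
`⟪∇f x, w⟫ = ⟪B x, w⟫` for the Hessian `B = D(∇f)(z)` at some point `z`. The Hessian of a `C²`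
function is symmetric, so by polarization
`2⟪B x, w⟫ = ⟪B x, x⟫ + ⟪B w, w⟫ - ⟪B (x - w), x - w⟫ ≥ μ(‖x‖² + ‖w‖²) - L‖x - w‖²`.
The first two terms of the drift add up to `-2h‖x - w‖²`, which absorbs the cost `γhL‖x - w‖²`
of this bound because `γL ≤ 1`.
-/

section

variable {F : Type*} [NormedAddCommGroup F] [InnerProductSpace ℝ F]

theorem inner_sub_add_inner_sub (x w : F) : ⟪x, w - x⟫ + ⟪w, x - w⟫ = -‖x - w‖ ^ 2 := by
  rw [← neg_sub x w, inner_neg_right, ← real_inner_self_eq_norm_sq, inner_sub_left]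
  ring

theorem LinearMap.IsSymmetric.sub_le_two_inner {T : F →ₗ[ℝ] F} (hT : T.IsSymmetric)
    {μ L : ℝ} {x w : F} (hx : μ * ‖x‖ ^ 2 ≤ ⟪T x, x⟫) (hw : μ * ‖w‖ ^ 2 ≤ ⟪T w, w⟫)
    (hxw : ⟪T (x - w), x - w⟫ ≤ L * ‖x - w‖ ^ 2) :
    μ * ‖x‖ ^ 2 + μ * ‖w‖ ^ 2 - L * ‖x - w‖ ^ 2 ≤ 2 * ⟪T x, w⟫ := by
  have polarization : ⟪T (x - w), x - w⟫ = ⟪T x, x⟫ + ⟪T w, w⟫ - 2 * ⟪T x, w⟫ := by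
    rw [map_sub, inner_sub_left, inner_sub_right, inner_sub_right, hT w x,
      real_inner_comm (T x) w]
    ring
  linarith

variable [CompleteSpace F]

theorem inner_fderiv_gradient_apply (f : F → ℝ) (x u v : F) :
    ⟪fderiv ℝ (gradient f) x u, v⟫ = fderiv ℝ (fderiv ℝ f) x u v := by
  change ⟪fderiv ℝ ((InnerProductSpace.toDual ℝ F).symm ∘ fderiv ℝ f) x u, v⟫ = _
  rw [LinearIsometryEquiv.comp_fderiv]
  exact InnerProductSpace.toDual_symm_apply

theorem ContDiffAt.isSymmetric_fderiv_gradient {f : F → ℝ} {x : F} (hf : ContDiffAt ℝ 2 f x) :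
    (fderiv ℝ (gradient f) x : F →ₗ[ℝ] F).IsSymmetric := by
  intro u v
  have hsymm : IsSymmSndFDerivAt ℝ f x :=
    hf.isSymmSndFDerivAt (by simp [minSmoothness_of_isRCLikeNormedField])
  rw [ContinuousLinearMap.coe_coe, inner_fderiv_gradient_apply, real_inner_comm,
    inner_fderiv_gradient_apply, hsymm u v]

theorem ContDiff.differentiable_gradient {f : F → ℝ} {n : WithTop ℕ∞} (hf : ContDiff ℝ n f)
    (hn : 2 ≤ n) : Differentiable ℝ (gradient f) :=
  (InnerProductSpace.toDual ℝ F).symm.differentiable.comp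
    ((hf.fderiv_right (m := 1) (by simpa [one_add_one_eq_two] using hn)).differentiable
      one_ne_zero)

end

theorem exists_inner_sub_eq_inner_fderiv {E F : Type*} [NormedAddCommGroup E] [NormedSpace ℝ E]
    [NormedAddCommGroup F] [InnerProductSpace ℝ F] {g : E → F} (hg : Differentiable ℝ g)
    (w : F) (x y : E) : ∃ z, ⟪g y - g x, w⟫ = ⟪fderiv ℝ g z (y - x), w⟫ := by
  obtain ⟨z, -, hz⟩ := domain_mvt (f := fun z ↦ ⟪w, g z⟫)
    (fun z _ ↦ (((innerSL ℝ w).hasFDerivAt.comp z (hg z).hasFDerivAt)).hasFDerivWithinAt)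
    convex_univ (Set.mem_univ x) (Set.mem_univ y)
  refine ⟨z, ?_⟩
  simpa only [real_inner_comm w, inner_sub_right, map_sub, ContinuousLinearMap.comp_apply,
    innerSL_apply_apply] using hz

theorem lyapunov_drift_inequality_general
    (d : ℕ) (μ L γ h : ℝ)
    (hγ : 0 < γ) (hγL : γ ≤ 1 / L) (hh : 0 < h)
    (f : EuclideanSpace ℝ (Fin d) → ℝ) (hf : ContDiff ℝ 2 f)
    (hHess : ∀ x v : EuclideanSpace ℝ (Fin d),
      μ * ‖v‖ ^ 2 ≤ ⟪fderiv ℝ (gradient f) x v, v⟫ ∧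
        ⟪fderiv ℝ (gradient f) x v, v⟫ ≤ L * ‖v‖ ^ 2)
    (hgrad0 : gradient f 0 = 0) :
    ∀ x w : EuclideanSpace ℝ (Fin d),
      2 * h * ⟪x, w - x⟫ + 2 * h * ⟪w, x - w⟫ - 2 * γ * h * ⟪w, gradient f x⟫
        ≤ -(γ * μ * h) * (‖x‖ ^ 2 + ‖w‖ ^ 2) := by
  intro x w
  have hL : 0 < L := one_div_pos.mp (hγ.trans_le hγL)
  have hγL' : γ * L ≤ 1 := (le_div_iff₀ hL).mp hγL
  obtain ⟨z, hz⟩ := exists_inner_sub_eq_inner_fderiv (hf.differentiable_gradient le_rfl) w 0 x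
  rw [hgrad0, sub_zero, sub_zero] at hz
  have hcross : μ * ‖x‖ ^ 2 + μ * ‖w‖ ^ 2 - L * ‖x - w‖ ^ 2 ≤ 2 * ⟪w, gradient f x⟫ := by
    rw [real_inner_comm, hz]
    exact hf.contDiffAt.isSymmetric_fderiv_gradient.sub_le_two_inner
      (hHess z x).1 (hHess z w).1 (hHess z (x - w)).2
  have hdrift : 2 * h * ⟪x, w - x⟫ + 2 * h * ⟪w, x - w⟫ = -2 * h * ‖x - w‖ ^ 2 := by
    linear_combination 2 * h * inner_sub_add_inner_sub x w
  rw [hdrift]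
  nlinarith [mul_le_mul_of_nonneg_left hcross (mul_pos hγ hh).le,
    mul_le_mul_of_nonneg_right hγL' (mul_nonneg hh.le (sq_nonneg ‖x - w‖))]

/-- Drift inequality for the Lyapunov condition of RC-ULMC: if `f` is `C²` with
`μI ⪯ ∇²f ⪯ LI` everywhere (`0 < μ ≤ L`), `∇f(0) = 0`, `0 < γ ≤ 1/L` and
`h > 0`, then for all `x, w`:
`2h⟨x, w−x⟩ + 2h⟨w, x−w⟩ − 2γh⟨w, ∇f(x)⟩ ≤ −γμh(‖x‖² + ‖w‖²)`. -/
theorem lyapunov_drift_inequality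
    (d : ℕ) (μ L γ h : ℝ) (hμ : 0 < μ) (hμL : μ ≤ L)
    (hγ : 0 < γ) (hγL : γ ≤ 1 / L) (hh : 0 < h)
    (f : EuclideanSpace ℝ (Fin d) → ℝ) (hf : ContDiff ℝ 2 f)
    (hHess : ∀ x v : EuclideanSpace ℝ (Fin d),
      μ * ‖v‖ ^ 2 ≤ ⟪fderiv ℝ (gradient f) x v, v⟫ ∧
        ⟪fderiv ℝ (gradient f) x v, v⟫ ≤ L * ‖v‖ ^ 2)
    (hgrad0 : gradient f 0 = 0) :
    ∀ x w : EuclideanSpace ℝ (Fin d),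
      2 * h * ⟪x, w - x⟫ + 2 * h * ⟪w, x - w⟫ - 2 * γ * h * ⟪w, gradient f x⟫
        ≤ -(γ * μ * h) * (‖x‖ ^ 2 + ‖w‖ ^ 2) :=
  lyapunov_drift_inequality_general d μ L γ h hγ hγL hh f hf hHess hgrad0
end

section
/- Let d ≥ 1 be an integer and let h be a real number with 0 < h < 10^{-8}/d. Suppose a real sequence (a_m)_{m≥0} satisfies a_0 ≥ (320001/160000) d and a_{m+1} ≥ (1 − 2h + 2.9 d h²) a_m + 4dh − 5.7 d² h² for all m ≥ 0. Then for all m ≥ 0: a_m ≥ (1 − 2h)^m · d/320000 + (4d − 5.7 d² h)/(2 − 2.9 d h). -/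
/-!
The affine map `x ↦ r x + b` with `r = 1 - 2h + 2.9dh²` and `b = 4dh - 5.7d²h²` fixes
`c = (4d - 5.7d²h)/(2 - 2.9dh)`, so a nonnegative lower bound on the excess `a_m - c` is carried
to the next step multiplied by `r ≥ 1 - 2h`. The initial excess is at least `d/320000` because `c` exceeds `2d` only by
`0.1d²h/(2 - 2.9dh)`, which is negligible for `dh < 10⁻⁸`.
-/

theorem affine_recursion_lower_bound {R : Type*} [Semiring R] [PartialOrder R] [IsOrderedRing R]
    {r q b c e : R} {a : ℕ → R} (hq : 0 ≤ q) (hqr : q ≤ r) (he : 0 ≤ e)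
    (hfix : r * c + b = c) (h0 : e + c ≤ a 0) (hrec : ∀ m, r * a m + b ≤ a (m + 1)) :
    ∀ m, q ^ m * e + c ≤ a m := by
  intro m
  induction m with
  | zero => simpa using h0
  | succ m ih =>
    have hr : 0 ≤ r := hq.trans hqr
    calc q ^ (m + 1) * e + c = q * (q ^ m * e) + c := by rw [pow_succ', mul_assoc]
      _ ≤ r * (q ^ m * e) + (r * c + b) := by
        rw [hfix]
        gcongr
      _ = r * (q ^ m * e + c) + b := by rw [mul_add, add_assoc]
      _ ≤ r * a m + b := by gcongr
      _ ≤ a (m + 1) := hrec m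

theorem mul_lt_of_lt_div_natCast {ε x : ℝ} {n : ℕ} (hε : 0 < ε) (hx : x < ε / n) :
    n * x < ε := by
  rcases n.eq_zero_or_pos with rfl | hn
  · simpa using hε
  · rw [mul_comm]
    exact (lt_div_iff₀ (by exact_mod_cast hn)).mp hx

theorem lt_of_lt_div_natCast {ε x : ℝ} {n : ℕ} (hε : 0 ≤ ε) (hx : x < ε / n) : x < ε := by
  rcases n.eq_zero_or_pos with rfl | hn
  · simp only [Nat.cast_zero, div_zero] at hx
    exact hx.trans_le hε
  · exact hx.trans_le (div_le_self hε (by exact_mod_cast hn))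

section FixedPoint

variable {d h : ℝ}

theorem lowerBound_fixedPoint (hD : 2 - 2.9 * d * h ≠ 0) :
    (1 - 2 * h + 2.9 * d * h ^ 2) * ((4 * d - 5.7 * d ^ 2 * h) / (2 - 2.9 * d * h))
      + (4 * d * h - 5.7 * d ^ 2 * h ^ 2) = (4 * d - 5.7 * d ^ 2 * h) / (2 - 2.9 * d * h) := by
  linear_combination (-h) * div_mul_cancel₀ (4 * d - 5.7 * d ^ 2 * h) hD

theorem lowerBound_fixedPoint_le (hd : 0 ≤ d) (hdh : d * h < 1 / 100000000) :
    (4 * d - 5.7 * d ^ 2 * h) / (2 - 2.9 * d * h) ≤ 640001 / 320000 * d := by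
  rw [div_le_iff₀ (by linarith)]
  nlinarith [mul_le_mul_of_nonneg_left hdh.le hd]

end FixedPoint

theorem lower_bound_recursion_general
    (d : ℕ) (h : ℝ)
    (hhd : h < (1 / 100000000 : ℝ) / d)
    (a : ℕ → ℝ) (ha0 : (320001 / 160000 : ℝ) * d ≤ a 0)
    (hrec : ∀ m, (1 - 2 * h + 2.9 * d * h ^ 2) * a m + 4 * d * h - 5.7 * d ^ 2 * h ^ 2
      ≤ a (m + 1)) :
    ∀ m : ℕ, (1 - 2 * h) ^ m * ((d : ℝ) / 320000)
        + (4 * d - 5.7 * d ^ 2 * h) / (2 - 2.9 * d * h) ≤ a m := by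
  have hdh : (d : ℝ) * h < 1 / 100000000 := mul_lt_of_lt_div_natCast (by norm_num) hhd
  have hh : h < 1 / 100000000 := lt_of_lt_div_natCast (by norm_num) hhd
  have hd : (0 : ℝ) ≤ d := d.cast_nonneg
  refine affine_recursion_lower_bound (by linarith) (by nlinarith [sq_nonneg h])
    (by positivity) (lowerBound_fixedPoint (by linarith)) ?_ fun m => ?_
  · linarith [lowerBound_fixedPoint_le hd hdh]
  · rw [← add_sub_assoc]
    exact hrec m

/-- Deterministic recursion in the tightness example: if `0 < h < 10⁻⁸/d`,
`a_0 ≥ (320001/160000) d` and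
`a_{m+1} ≥ (1 − 2h + 2.9dh²) a_m + 4dh − 5.7d²h²`, then for all `m`,
`a_m ≥ (1 − 2h)^m · d/320000 + (4d − 5.7d²h)/(2 − 2.9dh)`. -/
theorem lower_bound_recursion
    (d : ℕ) (hd : 1 ≤ d) (h : ℝ) (hh : 0 < h)
    (hhd : h < (1 / 100000000 : ℝ) / d)
    (a : ℕ → ℝ) (ha0 : (320001 / 160000 : ℝ) * d ≤ a 0)
    (hrec : ∀ m, (1 - 2 * h + 2.9 * d * h ^ 2) * a m + 4 * d * h - 5.7 * d ^ 2 * h ^ 2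
      ≤ a (m + 1)) :
    ∀ m : ℕ, (1 - 2 * h) ^ m * ((d : ℝ) / 320000)
        + (4 * d - 5.7 * d ^ 2 * h) / (2 - 2.9 * d * h) ≤ a m :=
  lower_bound_recursion_general d h hhd a ha0 hrec
end
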